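/- For every integer n ≥ 2, the n-qubit GHZ state |ghz_n⟩ = (|0⟩^{⊗n} + |1⟩^{⊗n})/√2 attains the maximal quantum value of the ideal Mermin witness: ⟨ghz_n| M⁽ⁿ⁾ |ghz_n⟩ = 2^{n−1}, where M⁽ⁿ⁾ is the Mermin operator built from A₀⁽ʲ⁾ = X and A₁⁽ʲ⁾ = Y for every party j. -/

import Mathlib

/-!
For any `c` with `c² = -1` the Mermin recursion reads
`M_{k+1} + c N_{k+1} = (M_k + c N_k) (A₀⁽ᵏ⁾ + c A₁⁽ᵏ⁾)`, so `M_n + c N_n` is the Kronecker product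
`⊗ⱼ (A₀⁽ʲ⁾ + c A₁⁽ʲ⁾)`, and `c = ±i` gives `M = ½ (⊗(X + iY) + ⊗(X - iY))`
with `X + iY = 2|0⟩⟨1|` and `X - iY = 2|1⟩⟨0|`. The GHZ expectation of any operator is half the
sum of its four entries between `|0…0⟩` and `|1…1⟩`; here only `⟨0…0|⊗(X + iY)|1…1⟩` and
`⟨1…1|⊗(X - iY)|0…0⟩` survive, each equal to `2ⁿ`.
-/

open Matrix Complex
open scoped ComplexOrder

noncomputable section

/-- 2×2 complex matrices (single-qubit operators). -/
abbrev QubitMat := Matrix (Fin 2) (Fin 2) ℂ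

def PauliX : QubitMat := !![0, 1; 1, 0]
def PauliY : QubitMat := !![0, -Complex.I; Complex.I, 0]
def PauliZ : QubitMat := !![1, 0; 0, -1]

/-- Operators on (ℂ²)^{⊗n}, with the tensor factors indexed by `Fin n`
    (the entry indices are functions `Fin n → Fin 2`). -/
abbrev NMat (n : ℕ) := Matrix (Fin n → Fin 2) (Fin n → Fin 2) ℂ

/-- The 2×2 matrix `A` acting on the `j`-th tensor factor of (ℂ²)^{⊗n},
    padded with the identity on all other factors (Kronecker product). -/
def pad (n : ℕ) (j : Fin n) (A : QubitMat) : NMat n :=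
  fun f g => A (f j) (g j) * ∏ i ∈ Finset.univ.erase j, (if f i = g i then (1 : ℂ) else 0)

/-- The Mermin recursion `M_k, N_k` for the block of parties `a, a+1, …, a+k−1`
    (0-based), with `M_0 = 1, N_0 = 0`; so `M_1 = A₀⁽ᵃ⁾`, `N_1 = A₁⁽ᵃ⁾`, and
    `M_k = M_{k−1}A₀ − N_{k−1}A₁`, `N_k = M_{k−1}A₁ + N_{k−1}A₀`. -/
def blockPair {n : ℕ} (A : Fin n → Fin 2 → QubitMat) (a : ℕ) : ℕ → NMat n × NMat n
  | 0 => (1, 0)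
  | k + 1 =>
    let P := blockPair A a k
    if h : a + k < n then
      (P.1 * pad n ⟨a + k, h⟩ (A ⟨a + k, h⟩ 0) - P.2 * pad n ⟨a + k, h⟩ (A ⟨a + k, h⟩ 1),
        P.1 * pad n ⟨a + k, h⟩ (A ⟨a + k, h⟩ 1) + P.2 * pad n ⟨a + k, h⟩ (A ⟨a + k, h⟩ 0))
    else P

/-- The Mermin operator `M_n` built from the observables `A j 0`, `A j 1`. -/
def merminM {n : ℕ} (A : Fin n → Fin 2 → QubitMat) : NMat n := (blockPair A 0 n).1

/-- The companion operator `N_n`. -/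
def merminN {n : ℕ} (A : Fin n → Fin 2 → QubitMat) : NMat n := (blockPair A 0 n).2

/-- A dichotomic qubit observable: Hermitian with `A² = I`. -/
def IsDichotomic (A : QubitMat) : Prop := A.IsHermitian ∧ A * A = 1

/-- A quantum state: positive semidefinite with unit trace. -/
def IsState {n : ℕ} (ρ : NMat n) : Prop := ρ.PosSemidef ∧ ρ.trace = 1

/-- The rank-one projector |ψ⟩⟨ψ| associated to a vector ψ. -/
def pureMat {n : ℕ} (ψ : (Fin n → Fin 2) → ℂ) : NMat n := Matrix.vecMulVec ψ (star ψ)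

def IsUnitVec {n : ℕ} (ψ : (Fin n → Fin 2) → ℂ) : Prop := ∑ f, Complex.normSq (ψ f) = 1

/-- A pure state is biseparable if it is a product across some nontrivial
    bipartition S | Sᶜ of the parties. -/
def PureBisep {n : ℕ} (ψ : (Fin n → Fin 2) → ℂ) : Prop :=
  ∃ S : Finset (Fin n), S.Nonempty ∧ S ≠ Finset.univ ∧
    ∃ (φ : ({i : Fin n // i ∈ S} → Fin 2) → ℂ) (χ : ({i : Fin n // i ∉ S} → Fin 2) → ℂ),
      ∀ f, ψ f = φ (fun i => f i.1) * χ (fun i => f i.1)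

/-- A mixed state is biseparable if it is a convex combination of pure
    biseparable states. -/
def IsBiseparable {n : ℕ} (ρ : NMat n) : Prop :=
  ∃ (m : ℕ) (w : Fin m → ℝ) (ψ : Fin m → ((Fin n → Fin 2) → ℂ)),
    (∀ i, 0 ≤ w i) ∧ (∑ i, w i = 1) ∧ (∀ i, IsUnitVec (ψ i)) ∧ (∀ i, PureBisep (ψ i)) ∧
    ρ = ∑ i, (w i : ℂ) • pureMat (ψ i)

/-- The expectation value ⟨ψ|M|ψ⟩. -/
def expectVal {n : ℕ} (ψ : (Fin n → Fin 2) → ℂ) (M : NMat n) : ℂ :=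
  star ψ ⬝ᵥ (M *ᵥ ψ)

/-- The n-qubit GHZ state (|0⟩^{⊗n} + |1⟩^{⊗n})/√2 as a vector in (ℂ²)^{⊗n}. -/
def ghz (n : ℕ) : (Fin n → Fin 2) → ℂ := fun f =>
  ((if ∀ j, f j = 0 then (1 : ℂ) else 0) + (if ∀ j, f j = 1 then (1 : ℂ) else 0))
    / ((Real.sqrt 2 : ℝ) : ℂ)

section Kronecker

variable {n : ℕ}

def kron (C : Fin n → QubitMat) : NMat n := fun f g => ∏ i, C i (f i) (g i)

theorem kron_mul (C D : Fin n → QubitMat) : kron C * kron D = kron (C * D) := by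
  ext f g
  simp only [kron, Matrix.mul_apply, Pi.mul_apply, Finset.prod_univ_sum, Fintype.piFinset_univ,
    Finset.prod_mul_distrib]

theorem kron_one : kron (1 : Fin n → QubitMat) = 1 := by
  ext f g
  simp [kron, Matrix.one_apply, Finset.prod_ite_zero, funext_iff]

theorem pad_eq_kron (j : Fin n) (B : QubitMat) : pad n j B = kron (Function.update 1 j B) := by
  ext f g
  rw [kron, ← Finset.mul_prod_erase _ _ (Finset.mem_univ j), pad]
  congr 1
  · simp
  · refine Finset.prod_congr rfl fun i hi => ?_
    rw [Function.update_of_ne (Finset.ne_of_mem_erase hi), Pi.one_apply, Matrix.one_apply]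

theorem pad_add_smul (j : Fin n) (B B' : QubitMat) (c : ℂ) :
    pad n j (B + c • B') = pad n j B + c • pad n j B' := by
  ext f g
  simp only [pad, Matrix.add_apply, Matrix.smul_apply, smul_eq_mul]
  ring

theorem blockPair_fst_add_smul_snd (A : Fin n → Fin 2 → QubitMat) (a : ℕ) {c : ℂ}
    (hc : c * c = -1) (k : ℕ) :
    (blockPair A a k).1 + c • (blockPair A a k).2 =
      kron fun j => if a ≤ (j : ℕ) ∧ (j : ℕ) < a + k then A j 0 + c • A j 1 else 1 := by
  induction k with
  | zero =>
    have hempty : (fun j : Fin n => if a ≤ (j : ℕ) ∧ (j : ℕ) < a + 0 then A j 0 + c • A j 1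
        else 1) = 1 := by
      funext j
      rw [if_neg (by omega)]
      rfl
    rw [hempty, kron_one]
    simp [blockPair]
  | succ k ih =>
    by_cases h : a + k < n
    · set j : Fin n := ⟨a + k, h⟩
      have hstep : (blockPair A a (k + 1)).1 + c • (blockPair A a (k + 1)).2 =
          ((blockPair A a k).1 + c • (blockPair A a k).2) * pad n j (A j 0 + c • A j 1) := by
        simp only [blockPair, dif_pos h, pad_add_smul, mul_add, add_mul, smul_mul_assoc,
          mul_smul_comm, smul_add, smul_smul, hc, neg_smul, one_smul]
        abel
      rw [hstep, ih, pad_eq_kron, kron_mul]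
      congr 1
      funext i
      by_cases hi : i = j
      · subst hi; simp [j]
      · have : (i : ℕ) ≠ a + k := fun h' => hi (Fin.ext h')
        simp only [Pi.mul_apply, Function.update_of_ne hi, Pi.one_apply, mul_one]
        exact if_congr (by omega) rfl rfl
    · simp only [blockPair, dif_neg h]
      rw [ih]
      congr 1
      funext i
      exact if_congr (by omega) rfl rfl

theorem merminM_eq_half_add (A : Fin n → Fin 2 → QubitMat) :
    merminM A = (2 : ℂ)⁻¹ •
      (kron (fun j => A j 0 + I • A j 1) + kron (fun j => A j 0 - I • A j 1)) := by
  have hwindow : ∀ j : Fin n, 0 ≤ (j : ℕ) ∧ (j : ℕ) < 0 + n := fun j => ⟨Nat.zero_le _, by omega⟩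
  have hplus := blockPair_fst_add_smul_snd A 0 I_mul_I n
  have hminus := blockPair_fst_add_smul_snd A 0 (c := -I) (by simp) n
  simp only [hwindow, and_self, if_true, neg_smul, ← sub_eq_add_neg] at hplus hminus
  rw [merminM, ← hplus, ← hminus, add_add_sub_cancel, ← two_smul ℂ, smul_smul,
    inv_mul_cancel₀ two_ne_zero, one_smul]

theorem ghz_eq_smul_sum_single :
    ghz n = ((Real.sqrt 2 : ℝ) : ℂ)⁻¹ • ∑ a : Fin 2, Pi.single (fun _ => a) 1 := by
  funext f
  simp [ghz, Pi.single_apply, funext_iff, Fin.sum_univ_two, div_eq_inv_mul]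

theorem expectVal_ghz (M : NMat n) :
    expectVal (ghz n) M = (∑ a : Fin 2, ∑ b : Fin 2, M (fun _ => a) (fun _ => b)) / 2 := by
  have hnorm : star ((Real.sqrt 2 : ℝ) : ℂ)⁻¹ * ((Real.sqrt 2 : ℝ) : ℂ)⁻¹ = 2⁻¹ := by
    rw [star_inv₀, Complex.star_def, Complex.conj_ofReal, ← mul_inv, ← Complex.ofReal_mul,
      Real.mul_self_sqrt zero_le_two, Complex.ofReal_ofNat]
  rw [expectVal, ghz_eq_smul_sum_single, star_smul, Matrix.mulVec_smul, smul_dotProduct,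
    dotProduct_smul, smul_smul, hnorm]
  simp only [Fin.sum_univ_two, star_add, Pi.star_single, star_one, mulVec_add, mulVec_single,
    MulOpposite.op_one, one_smul, dotProduct_add, add_dotProduct, single_dotProduct, col_apply,
    one_mul, smul_eq_mul]
  ring

theorem kron_const_apply_const (B : QubitMat) (a b : Fin 2) :
    kron (fun _ : Fin n => B) (fun _ => a) (fun _ => b) = B a b ^ n := by
  simp [kron]

end Kronecker

theorem pauliX_add_I_smul_pauliY : PauliX + I • PauliY = !![0, 2; 0, 0] := by
  ext a b
  fin_cases a <;> fin_cases b <;> norm_num [PauliX, PauliY]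

theorem pauliX_sub_I_smul_pauliY : PauliX - I • PauliY = !![0, 0; 2, 0] := by
  ext a b
  fin_cases a <;> fin_cases b <;> norm_num [PauliX, PauliY]

/-- the GHZ state attains the maximal quantum value 2^{n−1} of the
    ideal Mermin witness (A₀⁽ʲ⁾ = X, A₁⁽ʲ⁾ = Y for every party j). -/
theorem ghz_mermin_value
    (n : ℕ) (hn : 2 ≤ n)
    (A : Fin n → Fin 2 → QubitMat)
    (hA : ∀ j : Fin n, A j 0 = PauliX ∧ A j 1 = PauliY) :
    expectVal (ghz n) (merminM A) = (((2 : ℝ) ^ (n - 1) : ℝ) : ℂ) := by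
  obtain ⟨m, rfl⟩ : ∃ m, n = m + 1 := ⟨n - 1, by omega⟩
  simp only [merminM_eq_half_add, hA, pauliX_add_I_smul_pauliY, pauliX_sub_I_smul_pauliY,
    expectVal_ghz, Matrix.smul_apply, Matrix.add_apply, kron_const_apply_const]
  norm_num [Fin.sum_univ_two]
  ring
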